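/- Let α : ℝ → ℝ be a smooth bump function supported in (1,3) with α(2) = 1, and define f(x,y) = x·α(y/x²) for x ≠ 0 and f(x,y) = 0 for x = 0. Then f is continuous on ℝ². -/
import Mathlib


theorem bump_construction_continuous (α : ℝ → ℝ) (hα : ContDiff ℝ (⊤ : ℕ∞) α)
    (hrange : ∀ t, α t ∈ Set.Icc (0 : ℝ) 1)
    (hsupp : Function.support α ⊆ Set.Ioo 1 3) (hα2 : α 2 = 1)
    (f : ℝ × ℝ → ℝ)
    (hf : ∀ x y : ℝ, x ≠ 0 → f (x, y) = x * α (y / x ^ 2))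
    (hf0 : ∀ y : ℝ, f (0, y) = 0) :
    Continuous f := by
  have hbound : ∀ p : ℝ × ℝ, ‖f p‖ ≤ |p.1| := by
    rintro ⟨x, y⟩
    by_cases hx : x = 0
    · subst hx; simp [hf0]
    · rw [hf x y hx]
      have h0 := (hrange (y / x ^ 2)).1
      have h1 := (hrange (y / x ^ 2)).2
      rw [Real.norm_eq_abs, abs_mul]
      calc |x| * |α (y / x ^ 2)| ≤ |x| * 1 := by
            apply mul_le_mul_of_nonneg_left _ (abs_nonneg x)
            rw [abs_le]; constructor <;> linarith
        _ = |x| := mul_one _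
  rw [continuous_iff_continuousAt]
  rintro ⟨x, y⟩
  by_cases hx : x = 0
  · subst hx
    have : f (0, y) = 0 := hf0 y
    unfold ContinuousAt
    rw [this]
    apply squeeze_zero_norm hbound
    have : Filter.Tendsto (fun p : ℝ × ℝ => p.1) (nhds (0, y)) (nhds 0) :=
      continuous_fst.continuousAt
    simpa using this.abs
  · have hcont : ContinuousAt (fun p : ℝ × ℝ => p.1 * α (p.2 / p.1 ^ 2))
        (x, y) := by
      apply ContinuousAt.mul continuousAt_fst
      apply (hα.continuous.continuousAt).comp
      exact ContinuousAt.div continuousAt_snd (continuousAt_fst.pow 2)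
        (by simpa using pow_ne_zero 2 hx)
    apply hcont.congr
    have hopen : IsOpen {p : ℝ × ℝ | p.1 ≠ 0} :=
      isOpen_compl_iff.mpr (isClosed_eq continuous_fst continuous_const)
    filter_upwards [hopen.mem_nhds hx] with p hp
    rw [show p = (p.1, p.2) from rfl, hf p.1 p.2 hp]
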